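/- arXiv:2210.08584 — 2 statements merged into one kernel-verified Lean document; each statement's English description precedes it below -/
import Mathlib

section
/- Let q : [0,T] → R_+ be a gauge function (strictly increasing, continuous, q(0)=0) with q² differentiable on (0,T], and suppose q satisfies condition (q3) with constant C_1, i.e., ∫_0^τ q(ρ)(ρ√(log(T/ρ)))^{-1} dρ ≤ C_1 q(τ)√(log(T/τ)). Then for every sufficiently small ε > 0, ∫_0^ε √(log(T/q^{-1}(ρ))) dρ ≤ (C_1 + 1) ε √(log(T/q^{-1}(ε))). -/
open MeasureTheory ProbabilityTheory Filter Set Topology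

/-!
With `a = q⁻¹(ε)` and `b = q⁻¹(ρ)`, the fundamental theorem of calculus gives
`2√log(T/b) - 2√log(T/a) = ∫_b^a dτ / (τ √log(T/τ))`. Since `ρ < q τ ↔ q⁻¹(ρ) < τ`, Tonelli turns
`∫_0^ε (2√log(T/q⁻¹ρ) - 2√log(T/a)) dρ` into `∫_0^a q(τ) / (τ √log(T/τ)) dτ`, which (q3) bounds by
`C₁ ε √log(T/a)`; adding back `ε √log(T/a)` gives the claim.
-/

lemma hasDerivAt_neg_two_mul_sqrt_log_div {T x : ℝ} (hx : 0 < x) (hxT : x < T) :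
    HasDerivAt (fun t => -2 * √(Real.log (T / t))) (1 / (x * √(Real.log (T / x)))) x := by
  have hT : 0 < T := hx.trans hxT
  have hlog : 0 < Real.log (T / x) := Real.log_pos ((one_lt_div hx).2 hxT)
  have hdiv : HasDerivAt (fun t => T / t) (-(T / x ^ 2)) x := by
    simpa [div_eq_mul_inv] using (hasDerivAt_inv hx.ne').const_mul T
  have := Real.sqrt_pos.2 hlog
  refine (((hdiv.log (by positivity)).sqrt hlog.ne').const_mul (-2)).congr_deriv ?_
  field_simp

lemma lintegral_Ioc_one_div_mul_sqrt_log {T a b : ℝ} (hb : 0 < b) (hba : b ≤ a) (haT : a ≤ T) :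
    ∫⁻ τ in Ioc b a, ENNReal.ofReal (1 / (τ * √(Real.log (T / τ)))) =
      ENNReal.ofReal (2 * √(Real.log (T / b)) - 2 * √(Real.log (T / a))) := by
  have hcont : ContinuousOn (fun t => -2 * √(Real.log (T / t))) (Icc b a) := by
    refine continuousOn_const.mul (ContinuousOn.sqrt ?_)
    exact (continuousOn_const.div continuousOn_id fun t ht => (hb.trans_le ht.1).ne').log
      fun t ht => (div_pos (hb.trans_le (hba.trans haT)) (hb.trans_le ht.1)).ne'
  have hderiv : ∀ x ∈ Ioo b a, HasDerivAt (fun t => -2 * √(Real.log (T / t)))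
      (1 / (x * √(Real.log (T / x)))) x :=
    fun x hx => hasDerivAt_neg_two_mul_sqrt_log_div (hb.trans hx.1) (hx.2.trans_le haT)
  have hnonneg : ∀ x ∈ Ioc b a, 0 ≤ 1 / (x * √(Real.log (T / x))) :=
    fun x hx => by have := hb.trans hx.1; positivity
  have hint := intervalIntegral.integrableOn_deriv_of_nonneg hcont hderiv
    fun x hx => hnonneg x (Ioo_subset_Ioc_self hx)
  rw [← ofReal_integral_eq_lintegral_ofReal hint
    ((ae_restrict_iff' measurableSet_Ioc).2 (ae_of_all _ hnonneg)),
    ← intervalIntegral.integral_of_le hba,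
    intervalIntegral.integral_eq_sub_of_hasDerivAt_of_le hba hcont hderiv
      ((intervalIntegrable_iff_integrableOn_Ioc_of_le hba).2 hint)]
  ring_nf

lemma lintegral_Ioc_lintegral_inter_preimage_Ioi {β : Type*} [MeasurableSpace β] {ν : Measure β}
    [SFinite ν] {s : Set β} (hs : MeasurableSet s) {q : β → ℝ} {g : β → ENNReal}
    (hq : AEMeasurable q (ν.restrict s)) (hg : Measurable g) {ε : ℝ} (hqε : ∀ τ ∈ s, q τ ≤ ε) :
    ∫⁻ ρ in Ioc 0 ε, ∫⁻ τ in s ∩ q ⁻¹' Ioi ρ, g τ ∂ν =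
      ∫⁻ τ in s, g τ * ENNReal.ofReal (q τ) ∂ν := by
  have hkernel : AEMeasurable (Function.uncurry fun ρ τ => (q ⁻¹' Ioi ρ).indicator g τ)
      ((volume.restrict (Ioc 0 ε)).prod (ν.restrict s)) := by
    have hmk : (fun p : ℝ × β => q p.2) =ᵐ[(volume.restrict (Ioc 0 ε)).prod (ν.restrict s)]
        fun p => hq.mk q p.2 :=
      Measure.quasiMeasurePreserving_snd.ae_eq_comp hq.ae_eq_mk
    refine AEMeasurable.congr (f := fun p : ℝ × β => if p.1 < hq.mk q p.2 then g p.2 else 0) ?_ ?_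
    · exact Measurable.aemeasurable (Measurable.ite (measurableSet_lt measurable_fst
        (hq.measurable_mk.comp measurable_snd)) (hg.comp measurable_snd) measurable_const)
    · filter_upwards [hmk] with p hp
      simp only [Function.uncurry, indicator, mem_preimage, mem_Ioi, hp]
  calc ∫⁻ ρ in Ioc 0 ε, ∫⁻ τ in s ∩ q ⁻¹' Ioi ρ, g τ ∂ν
      = ∫⁻ ρ in Ioc 0 ε, ∫⁻ τ in s, (q ⁻¹' Ioi ρ).indicator g τ ∂ν := by
        refine lintegral_congr fun ρ => ?_
        have hρ := hq.nullMeasurableSet_preimage (measurableSet_Ioi (a := ρ))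
        rw [lintegral_indicator₀ hρ, Measure.restrict_restrict₀ hρ, inter_comm]
    _ = ∫⁻ τ in s, (∫⁻ ρ in Ioc 0 ε, (q ⁻¹' Ioi ρ).indicator g τ) ∂ν :=
        lintegral_lintegral_swap hkernel
    _ = ∫⁻ τ in s, g τ * ENNReal.ofReal (q τ) ∂ν := by
        refine setLIntegral_congr_fun hs fun τ hτ => ?_
        have hslice : ∀ ρ,
            (q ⁻¹' Ioi ρ).indicator g τ = (Iio (q τ)).indicator (fun _ => g τ) ρ := by
          intro ρ
          simp only [indicator, mem_preimage, mem_Ioi, mem_Iio]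
        have hset : Iio (q τ) ∩ Ioc 0 ε = Ioo 0 (q τ) := by
          ext ρ
          simp only [mem_inter_iff, mem_Iio, mem_Ioc, mem_Ioo]
          exact ⟨fun h => ⟨h.2.1, h.1⟩, fun h => ⟨h.2, h.1, h.2.le.trans (hqε τ hτ)⟩⟩
        simp only [hslice]
        rw [lintegral_indicator measurableSet_Iio, setLIntegral_const,
          Measure.restrict_apply measurableSet_Iio, hset, Real.volume_Ioo, sub_zero]

lemma lintegral_sqrt_log_div_inv_sub {T a ε : ℝ} {q qinv : ℝ → ℝ} (haT : a ≤ T)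
    (hq : AEMeasurable q (volume.restrict (Ioc 0 a))) (hqε : ∀ τ ∈ Ioc 0 a, q τ ≤ ε)
    (hqinv : ∀ ρ ∈ Ioc 0 ε, 0 < qinv ρ ∧ qinv ρ ≤ a)
    (hlt_iff : ∀ ρ ∈ Ioc 0 ε, ∀ τ ∈ Ioc 0 a, ρ < q τ ↔ qinv ρ < τ) :
    ∫⁻ ρ in Ioc 0 ε, ENNReal.ofReal (2 * √(Real.log (T / qinv ρ)) - 2 * √(Real.log (T / a))) =
      ∫⁻ τ in Ioc 0 a, ENNReal.ofReal (q τ / (τ * √(Real.log (T / τ)))) := by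
  have hg : Measurable fun τ : ℝ => ENNReal.ofReal (1 / (τ * √(Real.log (T / τ)))) := by
    fun_prop
  calc ∫⁻ ρ in Ioc 0 ε, ENNReal.ofReal (2 * √(Real.log (T / qinv ρ)) - 2 * √(Real.log (T / a)))
      = ∫⁻ ρ in Ioc 0 ε, ∫⁻ τ in Ioc 0 a ∩ q ⁻¹' Ioi ρ,
          ENNReal.ofReal (1 / (τ * √(Real.log (T / τ)))) := by
        refine setLIntegral_congr_fun measurableSet_Ioc fun ρ hρ => ?_
        obtain ⟨hpos, hle⟩ := hqinv ρ hρ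
        have hset : Ioc 0 a ∩ q ⁻¹' Ioi ρ = Ioc (qinv ρ) a := by
          ext τ
          simp only [mem_inter_iff, mem_preimage, mem_Ioi, mem_Ioc]
          exact ⟨fun h => ⟨(hlt_iff ρ hρ τ h.1).1 h.2, h.1.2⟩,
            fun h => ⟨⟨hpos.trans h.1, h.2⟩, (hlt_iff ρ hρ τ ⟨hpos.trans h.1, h.2⟩).2 h.1⟩⟩
        rw [hset, lintegral_Ioc_one_div_mul_sqrt_log hpos hle haT]
    _ = ∫⁻ τ in Ioc 0 a, ENNReal.ofReal (1 / (τ * √(Real.log (T / τ)))) * ENNReal.ofReal (q τ) :=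
        lintegral_Ioc_lintegral_inter_preimage_Ioi measurableSet_Ioc hq hg hqε
    _ = ∫⁻ τ in Ioc 0 a, ENNReal.ofReal (q τ / (τ * √(Real.log (T / τ)))) := by
        refine setLIntegral_congr_fun measurableSet_Ioc fun τ hτ => ?_
        have := hτ.1
        rw [← ENNReal.ofReal_mul (by positivity), one_div_mul_eq_div]

lemma integral_sqrt_log_div_inv_le {T a ε C : ℝ} {q qinv : ℝ → ℝ} (hε : 0 < ε) (haT : a ≤ T)
    (hq : AEMeasurable q (volume.restrict (Ioc 0 a))) (hq_nonneg : ∀ τ ∈ Ioc 0 a, 0 ≤ q τ)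
    (hqε : ∀ τ ∈ Ioc 0 a, q τ ≤ ε) (hqinv : ∀ ρ ∈ Ioc 0 ε, 0 < qinv ρ ∧ qinv ρ ≤ a)
    (hlt_iff : ∀ ρ ∈ Ioc 0 ε, ∀ τ ∈ Ioc 0 a, ρ < q τ ↔ qinv ρ < τ)
    (hC : ∫ τ in Ioc 0 a, q τ / (τ * √(Real.log (T / τ))) ≤ C * (ε * √(Real.log (T / a)))) :
    ∫ ρ in Ioc 0 ε, √(Real.log (T / qinv ρ)) ≤ (C + 1) * ε * √(Real.log (T / a)) := by
  set c := √(Real.log (T / a))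
  set p : ℝ → ℝ := fun ρ => 2 * √(Real.log (T / qinv ρ)) - 2 * c
  have hh_nonneg : 0 ≤ᵐ[volume.restrict (Ioc 0 a)] fun τ => q τ / (τ * √(Real.log (T / τ))) :=
    (ae_restrict_iff' measurableSet_Ioc).2 (ae_of_all _ fun τ hτ =>
      div_nonneg (hq_nonneg τ hτ) (mul_nonneg hτ.1.le (Real.sqrt_nonneg _)))
  have hCεc : 0 ≤ C * (ε * c) := (integral_nonneg_of_ae hh_nonneg).trans hC
  have hεc : 0 ≤ ε * c := mul_nonneg hε.le (Real.sqrt_nonneg _)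
  by_cases hfi : IntegrableOn (fun ρ => √(Real.log (T / qinv ρ))) (Ioc 0 ε)
  swap
  · rw [integral_undef hfi]
    nlinarith
  have hp_nonneg : 0 ≤ᵐ[volume.restrict (Ioc 0 ε)] p := by
    refine (ae_restrict_iff' measurableSet_Ioc).2 (ae_of_all _ fun ρ hρ => ?_)
    obtain ⟨hpos, hle⟩ := hqinv ρ hρ
    have : c ≤ √(Real.log (T / qinv ρ)) := Real.sqrt_le_sqrt (Real.log_le_log
      (div_pos (hpos.trans_le (hle.trans haT)) (hpos.trans_le hle))
      (div_le_div_of_nonneg_left (hpos.trans_le (hle.trans haT)).le hpos hle))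
    simp only [Pi.zero_apply, p]
    linarith
  have hp_int : IntegrableOn p (Ioc 0 ε) :=
    (hfi.const_mul 2).sub (integrableOn_const measure_Ioc_lt_top.ne)
  have hp_eq : ∫ ρ in Ioc 0 ε, p ρ = ∫ τ in Ioc 0 a, q τ / (τ * √(Real.log (T / τ))) := by
    have hh_meas : AEStronglyMeasurable (fun τ => q τ / (τ * √(Real.log (T / τ))))
        (volume.restrict (Ioc 0 a)) :=
      (hq.div (by fun_prop)).aestronglyMeasurable
    rw [integral_eq_lintegral_of_nonneg_ae hp_nonneg hp_int.aestronglyMeasurable,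
      integral_eq_lintegral_of_nonneg_ae hh_nonneg hh_meas,
      lintegral_sqrt_log_div_inv_sub haT hq hqε hqinv hlt_iff]
  have hsplit :
      ∫ ρ in Ioc 0 ε, √(Real.log (T / qinv ρ)) = (∫ ρ in Ioc 0 ε, p ρ) / 2 + ε * c := by
    have hfun : (fun ρ => √(Real.log (T / qinv ρ))) = fun ρ => p ρ / 2 + c := by
      funext ρ; simp only [p]; ring
    rw [hfun, integral_add (hp_int.div_const 2) (integrableOn_const measure_Ioc_lt_top.ne),
      integral_div, setIntegral_const, Real.volume_real_Ioc_of_le hε.le, sub_zero, smul_eq_mul]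
  have hp_int_nonneg := integral_nonneg_of_ae hp_nonneg
  rw [hsplit]
  linarith

theorem stmt6_general (T : ℝ) (hT : 0 < T) (q qinv : ℝ → ℝ)
    (hq0 : q 0 = 0) (hqm : StrictMonoOn q (Set.Icc 0 T))
    (hinv' : ∀ ρ ∈ Set.Icc 0 (q T), qinv ρ ∈ Set.Icc 0 T ∧ q (qinv ρ) = ρ)
    (C₁ : ℝ)
    (hq3 : ∀ τ ∈ Set.Ioc (0:ℝ) T,
      (∫ ρ in Set.Ioc (0:ℝ) τ, q ρ / (ρ * Real.sqrt (Real.log (T / ρ)))) ≤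
        C₁ * (q τ * Real.sqrt (Real.log (T / τ)))) :
    ∃ ε₀ > 0, ∀ ε ∈ Set.Ioc (0:ℝ) ε₀,
      (∫ ρ in Set.Ioc (0:ℝ) ε, Real.sqrt (Real.log (T / qinv ρ))) ≤
        (C₁ + 1) * ε * Real.sqrt (Real.log (T / qinv ε)) := by
  have h0 : (0 : ℝ) ∈ Icc 0 T := ⟨le_rfl, hT.le⟩
  refine ⟨q T, hq0 ▸ hqm h0 ⟨hT.le, le_rfl⟩ hT, fun ε ⟨hε, hεT⟩ => ?_⟩
  have hinv_Ioc : ∀ ρ ∈ Ioc 0 ε, qinv ρ ∈ Ioc 0 T ∧ q (qinv ρ) = ρ := by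
    intro ρ hρ
    obtain ⟨hmem, hq⟩ := hinv' ρ ⟨hρ.1.le, hρ.2.trans hεT⟩
    refine ⟨⟨hmem.1.lt_of_ne fun h => ?_, hmem.2⟩, hq⟩
    rw [← h, hq0] at hq
    exact hρ.1.ne hq
  obtain ⟨⟨ha, haT⟩, hqa⟩ := hinv_Ioc ε ⟨hε, le_rfl⟩
  have hsub : Ioc 0 (qinv ε) ⊆ Icc 0 T := fun τ hτ => ⟨hτ.1.le, hτ.2.trans haT⟩
  refine integral_sqrt_log_div_inv_le hε haT
    (aemeasurable_restrict_of_monotoneOn measurableSet_Ioc (hqm.monotoneOn.mono hsub))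
    (fun τ hτ => hq0 ▸ hqm.monotoneOn h0 (hsub hτ) hτ.1.le)
    (fun τ hτ => hqa ▸ hqm.monotoneOn (hsub hτ) ⟨ha.le, haT⟩ hτ.2)
    (fun ρ hρ => ⟨(hinv_Ioc ρ hρ).1.1, ?_⟩) (fun ρ hρ τ hτ => ?_)
    (by simpa only [hqa] using hq3 (qinv ε) ⟨ha, haT⟩)
  · obtain ⟨hmem, hq⟩ := hinv_Ioc ρ hρ
    rw [← hqm.le_iff_le (Ioc_subset_Icc_self hmem) ⟨ha.le, haT⟩, hq, hqa]
    exact hρ.2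
  · obtain ⟨hmem, hq⟩ := hinv_Ioc ρ hρ
    rw [← hqm.lt_iff_lt (Ioc_subset_Icc_self hmem) (hsub hτ), hq]

theorem stmt6 (T : ℝ) (hT : 0 < T) (q qinv : ℝ → ℝ)
    (hq0 : q 0 = 0) (hqc : ContinuousOn q (Set.Icc 0 T)) (hqm : StrictMonoOn q (Set.Icc 0 T))
    (hdiff : ∀ τ ∈ Set.Ioc (0:ℝ) T, DifferentiableAt ℝ (fun s => q s ^ 2) τ)
    (hinv : ∀ τ ∈ Set.Icc (0:ℝ) T, qinv (q τ) = τ)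
    (hinv' : ∀ ρ ∈ Set.Icc 0 (q T), qinv ρ ∈ Set.Icc 0 T ∧ q (qinv ρ) = ρ)
    (C₁ : ℝ) (hC₁ : 0 < C₁)
    (hq3 : ∀ τ ∈ Set.Ioc (0:ℝ) T,
      (∫ ρ in Set.Ioc (0:ℝ) τ, q ρ / (ρ * Real.sqrt (Real.log (T / ρ)))) ≤
        C₁ * (q τ * Real.sqrt (Real.log (T / τ)))) :
    ∃ ε₀ > 0, ∀ ε ∈ Set.Ioc (0:ℝ) ε₀,
      (∫ ρ in Set.Ioc (0:ℝ) ε, Real.sqrt (Real.log (T / qinv ρ))) ≤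
        (C₁ + 1) * ε * Real.sqrt (Real.log (T / qinv ε)) :=
  stmt6_general T hT q qinv hq0 hqm hinv' C₁ hq3
end

section
/- Let q be a gauge function on [0,T] with q² of class C¹ on (0,T] and K = √(d(q²)/dτ). Define the one-dimensional q-Brownian motion B^q(x) = ∫_0^x K(x-y) dW(y) for x ∈ [0,T], where W is a standard Brownian motion. Suppose d(q²)/dτ is non-increasing on (0,T]. Then for all x, y ∈ [0,T], E([B^q(x) - B^q(y)]²) ≤ 2 q²(|x - y|). -/
/-! For `y ≤ x` the kernels `u ↦ K (x - u)` and `u ↦ K (y - u)` overlap on `(0, y)`. There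
`0 ≤ K (x - u) ≤ K (y - u)` because `K` is nonnegative and non-increasing, so
`(K (x - u) - K (y - u))² ≤ K (y - u)² - K (x - u)²`, and `∫ₐᵇ K² = q b² - q a²` bounds the overlap
by `q y² - q x² + q (x - y)²`. On `(y, x)` only `K (x - u)²` is left, contributing `q (x - y)²`.
The total is `2 q (x - y)² - (q x² - q y²) ≤ 2 q (x - y)²`. -/

open MeasureTheory Set intervalIntegral

theorem intervalIntegrable_and_integral_eq_sub_of_hasDerivAt_of_nonneg {g g' : ℝ → ℝ} {a b : ℝ}
    (hab : a ≤ b) (hcont : ContinuousOn g (Icc a b))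
    (hderiv : ∀ x ∈ Ioo a b, HasDerivAt g (g' x) x) (hpos : ∀ x ∈ Ioo a b, 0 ≤ g' x) :
    IntervalIntegrable g' volume a b ∧ ∫ x in a..b, g' x = g b - g a := by
  have hint : IntervalIntegrable g' volume a b :=
    (intervalIntegrable_iff_integrableOn_Ioc_of_le hab).2
      (integrableOn_deriv_of_nonneg hcont hderiv hpos)
  exact ⟨hint, integral_eq_sub_of_hasDerivAt_of_le hab hcont hderiv hint⟩

structure IsGaugeKernel (T : ℝ) (q K : ℝ → ℝ) : Prop where
  map_zero : q 0 = 0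
  continuousOn : ContinuousOn q (Icc 0 T)
  hasDerivAt_sq : ∀ τ ∈ Ioc 0 T, HasDerivAt (fun s => q s ^ 2) (K τ ^ 2) τ
  nonneg : ∀ τ ∈ Ioc 0 T, 0 ≤ K τ
  antitoneOn_sq : AntitoneOn (fun τ => K τ ^ 2) (Ioc 0 T)

/-- `B^q x = ∫ volterraKernel K x u dW(u)`. -/
noncomputable def volterraKernel (K : ℝ → ℝ) (x u : ℝ) : ℝ := if u < x then K (x - u) else 0

namespace IsGaugeKernel

variable {T : ℝ} {q K : ℝ → ℝ} (h : IsGaugeKernel T q K) {a b c x y : ℝ}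
include h

theorem antitoneOn : AntitoneOn K (Ioc 0 T) := fun _ ha _ hb hab =>
  (pow_le_pow_iff_left₀ (h.nonneg _ hb) (h.nonneg _ ha) two_ne_zero).1 (h.antitoneOn_sq ha hb hab)

theorem integral_sq (ha : 0 ≤ a) (hab : a ≤ b) (hb : b ≤ T) :
    IntervalIntegrable (fun τ => K τ ^ 2) volume a b ∧
      ∫ τ in a..b, K τ ^ 2 = q b ^ 2 - q a ^ 2 :=
  intervalIntegrable_and_integral_eq_sub_of_hasDerivAt_of_nonneg hab
    ((h.continuousOn.mono (Icc_subset_Icc ha hb)).pow 2)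
    (fun τ hτ => h.hasDerivAt_sq τ ⟨ha.trans_lt hτ.1, hτ.2.le.trans hb⟩)
    (fun _ _ => sq_nonneg _)

theorem integral_sq_comp_sub (hb : 0 ≤ c - b) (hab : a ≤ b) (ha : c - a ≤ T) :
    IntervalIntegrable (fun u => K (c - u) ^ 2) volume a b ∧
      ∫ u in a..b, K (c - u) ^ 2 = q (c - a) ^ 2 - q (c - b) ^ 2 := by
  obtain ⟨hint, hval⟩ := h.integral_sq hb (by linarith) ha
  refine ⟨by simpa using (hint.comp_sub_left c).symm, ?_⟩
  rw [integral_comp_sub_left (fun τ => K τ ^ 2), hval]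

theorem monotoneOn_sq : MonotoneOn (fun s => q s ^ 2) (Icc 0 T) := fun y hy x hx hyx => by
  have hval := (h.integral_sq hy.1 hyx hx.2).2
  have hnonneg : 0 ≤ ∫ τ in y..x, K τ ^ 2 := integral_nonneg hyx fun _ _ => sq_nonneg _
  linarith

theorem sq_sub_volterraKernel_le (hyx : y ≤ x) (hx : x ≤ T) :
    ∀ u ∈ Ioo 0 y, (volterraKernel K x u - volterraKernel K y u) ^ 2 ≤
      K (y - u) ^ 2 - K (x - u) ^ 2 := by
  intro u hu
  have hxu : x - u ∈ Ioc 0 T := ⟨by linarith [hu.2], by linarith [hu.1]⟩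
  have hyu : y - u ∈ Ioc 0 T := ⟨by linarith [hu.2], by linarith [hu.1]⟩
  have hle : K (x - u) ≤ K (y - u) := h.antitoneOn hyu hxu (by linarith)
  have hnonneg := h.nonneg _ hxu
  simp only [volterraKernel, if_pos hu.2, if_pos (hu.2.trans_le hyx)]
  nlinarith

theorem aestronglyMeasurable_sq_sub_volterraKernel (hyx : y ≤ x) (hx : x ≤ T) :
    AEStronglyMeasurable (fun u => (volterraKernel K x u - volterraKernel K y u) ^ 2)
      (volume.restrict (Ioo 0 y)) := by
  have hmono : ∀ c, y ≤ c → c ≤ T → MonotoneOn (fun u => K (c - u)) (Ioo 0 y) :=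
    fun c hyc hc u hu v hv huv => h.antitoneOn ⟨by linarith [hv.2], by linarith [hv.1]⟩
      ⟨by linarith [hu.2], by linarith [hu.1]⟩ (by linarith)
  have hmeas := (((aemeasurable_restrict_of_monotoneOn (μ := volume) measurableSet_Ioo
    (hmono x hyx hx)).sub (aemeasurable_restrict_of_monotoneOn measurableSet_Ioo
      (hmono y le_rfl (hyx.trans hx)))).pow_const 2).aestronglyMeasurable
  refine hmeas.congr ((ae_restrict_mem measurableSet_Ioo).mono fun u hu => ?_)
  simp [volterraKernel, hu.2, hu.2.trans_le hyx]

theorem integral_sq_sub_volterraKernel_overlap_le (hy : 0 ≤ y) (hyx : y ≤ x) (hx : x ≤ T) :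
    IntervalIntegrable (fun u => (volterraKernel K x u - volterraKernel K y u) ^ 2) volume 0 y ∧
      ∫ u in 0..y, (volterraKernel K x u - volterraKernel K y u) ^ 2 ≤
        q y ^ 2 - q x ^ 2 + q (x - y) ^ 2 := by
  obtain ⟨hiy, hvy⟩ := h.integral_sq_comp_sub (a := 0) (c := y) (by simp) hy
    (by simpa using hyx.trans hx)
  obtain ⟨hix, hvx⟩ := h.integral_sq_comp_sub (a := 0) (c := x) (by linarith) hy
    (by simpa using hx)
  have hbound := h.sq_sub_volterraKernel_le hyx hx
  have hint : IntervalIntegrable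
      (fun u => (volterraKernel K x u - volterraKernel K y u) ^ 2) volume 0 y := by
    rw [intervalIntegrable_iff_integrableOn_Ioo_of_le hy]
    refine ((intervalIntegrable_iff_integrableOn_Ioo_of_le hy).1 (hiy.sub hix)).mono'
      (h.aestronglyMeasurable_sq_sub_volterraKernel hyx hx)
      ((ae_restrict_mem measurableSet_Ioo).mono fun u hu => ?_)
    rw [Real.norm_of_nonneg (sq_nonneg _)]
    exact hbound u hu
  refine ⟨hint, (integral_mono_on_of_le_Ioo hy hint (hiy.sub hix) hbound).trans_eq ?_⟩
  rw [integral_sub hiy hix, hvy, hvx]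
  simp [h.map_zero]
  ring

theorem integral_sq_sub_volterraKernel_increment_eq (hy : 0 ≤ y) (hyx : y ≤ x) (hx : x ≤ T) :
    IntervalIntegrable (fun u => (volterraKernel K x u - volterraKernel K y u) ^ 2) volume y x ∧
      ∫ u in y..x, (volterraKernel K x u - volterraKernel K y u) ^ 2 = q (x - y) ^ 2 := by
  obtain ⟨hint, hval⟩ := h.integral_sq_comp_sub (c := x) (by simp) hyx (by linarith)
  have heq : EqOn (fun u => K (x - u) ^ 2)
      (fun u => (volterraKernel K x u - volterraKernel K y u) ^ 2) (Ioo y x) := fun u hu => by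
    simp [volterraKernel, hu.2, hu.1.le.not_gt]
  refine ⟨hint.congr_uIoo (by rwa [uIoo_of_le hyx]), ?_⟩
  rw [← integral_congr_Ioo_of_le hyx heq, hval, sub_self, h.map_zero]
  ring

theorem integral_sq_sub_volterraKernel_le (hy : 0 ≤ y) (hyx : y ≤ x) (hx : x ≤ T) :
    ∫ u in Ioc 0 T, (volterraKernel K x u - volterraKernel K y u) ^ 2 ≤ 2 * q (x - y) ^ 2 := by
  obtain ⟨hi₁, hv₁⟩ := h.integral_sq_sub_volterraKernel_overlap_le hy hyx hx
  obtain ⟨hi₂, hv₂⟩ := h.integral_sq_sub_volterraKernel_increment_eq hy hyx hx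
  have hvanish : ∀ u ∈ Ioc 0 T \ Ioc 0 x,
      (volterraKernel K x u - volterraKernel K y u) ^ 2 = 0 := fun u hu => by
    have hxu : x ≤ u := not_lt.1 fun hux => hu.2 ⟨hu.1.1, hux.le⟩
    simp [volterraKernel, not_lt.2 hxu, not_lt.2 (hyx.trans hxu)]
  rw [setIntegral_eq_of_subset_of_forall_sdiff_eq_zero measurableSet_Ioc
      (Ioc_subset_Ioc_right hx) hvanish, ← integral_of_le (hy.trans hyx),
    ← integral_add_adjacent_intervals hi₁ hi₂]
  linarith [h.monotoneOn_sq ⟨hy, hyx.trans hx⟩ ⟨hy.trans hyx, hx⟩ hyx]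

end IsGaugeKernel

theorem stmt8_general {Ω : Type*} [MeasurableSpace Ω] (μ : Measure Ω)
    (T : ℝ) (q K : ℝ → ℝ)
    (hq0 : q 0 = 0) (hqc : ContinuousOn q (Set.Icc 0 T))
    (hK : ∀ τ ∈ Set.Ioc (0:ℝ) T, HasDerivAt (fun s => q s ^ 2) (K τ ^ 2) τ)
    (hKpos : ∀ τ ∈ Set.Ioc (0:ℝ) T, 0 ≤ K τ)
    (hmono : AntitoneOn (fun τ => K τ ^ 2) (Set.Ioc 0 T))
    (B : ℝ → Ω → ℝ)
    (hiso : ∀ x ∈ Set.Icc (0:ℝ) T, ∀ y ∈ Set.Icc (0:ℝ) T,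
      ∫ ω, (B x ω - B y ω) ^ 2 ∂μ =
        ∫ u in Set.Ioc (0:ℝ) T,
          ((if u < x then K (x - u) else 0) - (if u < y then K (y - u) else 0)) ^ 2) :
    ∀ x ∈ Set.Icc (0:ℝ) T, ∀ y ∈ Set.Icc (0:ℝ) T,
      ∫ ω, (B x ω - B y ω) ^ 2 ∂μ ≤ 2 * q |x - y| ^ 2 := by
  have hg : IsGaugeKernel T q K := ⟨hq0, hqc, hK, hKpos, hmono⟩
  intro x hx y hy
  rw [hiso x hx y hy]
  rcases le_total y x with hyx | hxy
  · rw [abs_of_nonneg (sub_nonneg.2 hyx)]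
    exact hg.integral_sq_sub_volterraKernel_le hy.1 hyx hx.2
  · rw [abs_of_nonpos (sub_nonpos.2 hxy), neg_sub]
    simp_rw [sub_sq_comm (if _ < x then _ else _)]
    exact hg.integral_sq_sub_volterraKernel_le hx.1 hxy hy.2

theorem stmt8 {Ω : Type*} [MeasurableSpace Ω] (μ : Measure Ω) [IsProbabilityMeasure μ]
    (T : ℝ) (hT : 0 < T) (q K : ℝ → ℝ)
    (hq0 : q 0 = 0) (hqc : ContinuousOn q (Set.Icc 0 T)) (hqm : StrictMonoOn q (Set.Icc 0 T))
    (hK : ∀ τ ∈ Set.Ioc (0:ℝ) T, HasDerivAt (fun s => q s ^ 2) (K τ ^ 2) τ)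
    (hKpos : ∀ τ ∈ Set.Ioc (0:ℝ) T, 0 ≤ K τ)
    (hmono : AntitoneOn (fun τ => K τ ^ 2) (Set.Ioc 0 T))
    (B : ℝ → Ω → ℝ)
    (hiso : ∀ x ∈ Set.Icc (0:ℝ) T, ∀ y ∈ Set.Icc (0:ℝ) T,
      ∫ ω, (B x ω - B y ω) ^ 2 ∂μ =
        ∫ u in Set.Ioc (0:ℝ) T,
          ((if u < x then K (x - u) else 0) - (if u < y then K (y - u) else 0)) ^ 2) :
    ∀ x ∈ Set.Icc (0:ℝ) T, ∀ y ∈ Set.Icc (0:ℝ) T,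
      ∫ ω, (B x ω - B y ω) ^ 2 ∂μ ≤ 2 * q |x - y| ^ 2 :=
  stmt8_general μ T q K hq0 hqc hK hKpos hmono B hiso
end
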